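/- arXiv:2402.09486 — 2 statements merged into one kernel-verified Lean document; each statement's English description precedes it below -/
import Mathlib

section
/- Let Y ⊆ ℝ^m, let z ∈ ℝ^m, and let λ ∈ ℝ^m with λ_i > 0 for all i. Suppose there exists k > 0 such that the point y* defined by y*_i = z_i + k·λ_i for all i belongs to Y and is Pareto optimal in Y (the full-mapping assumption). Then y* minimizes the modified Tchebycheff aggregation over Y: g^mtche(y*, λ) = k, and for every y ∈ Y, max_{i ∈ [m]} (y_i − z_i)/λ_i ≥ k. -/
/-! Every coordinate of `y*` sits at level exactly `k`, so its aggregation value is `k`. If some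
`y ∈ Y` had aggregation value below `k`, it would lie strictly below `y*` in every coordinate and
hence dominate it, contradicting Pareto optimality. -/

section

variable {ι : Type*} [Fintype ι] {z lam : ι → ℝ} {k : ℝ}

theorem sup'_div_eq_of_eq_add_mul {y : ι → ℝ} (hlam : ∀ i, lam i ≠ 0)
    (hy : ∀ i, y i = z i + k * lam i) (H : (Finset.univ : Finset ι).Nonempty) :
    Finset.univ.sup' H (fun i => (y i - z i) / lam i) = k := by
  have hconst : (fun i => (y i - z i) / lam i) = fun _ => k :=
    funext fun i => by rw [hy i, add_sub_cancel_left, mul_div_cancel_right₀ _ (hlam i)]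
  rw [hconst, Finset.sup'_const]

theorem lt_add_mul_of_sup'_div_lt {y : ι → ℝ} (hlam : ∀ i, 0 < lam i)
    {H : (Finset.univ : Finset ι).Nonempty}
    (hlt : Finset.univ.sup' H (fun i => (y i - z i) / lam i) < k) (i : ι) :
    y i < z i + k * lam i := by
  have hi := (Finset.sup'_lt_iff H).mp hlt i (Finset.mem_univ i)
  rw [div_lt_iff₀ (hlam i)] at hi
  linarith

end

theorem full_mapping_point_minimizes_mtche_general {m : ℕ} (hm : 0 < m)
    (Y : Set (Fin m → ℝ)) (z lam : Fin m → ℝ) (hlam : ∀ i, 0 < lam i)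
    (k : ℝ)
    (ystar : Fin m → ℝ) (hdef : ∀ i, ystar i = z i + k * lam i)
    (hpareto : ¬ ∃ y ∈ Y, (∀ i, y i ≤ ystar i) ∧ ∃ j, y j < ystar j) :
    Finset.univ.sup' (Finset.univ_nonempty_iff.mpr (Fin.pos_iff_nonempty.mp hm))
        (fun i => (ystar i - z i) / lam i) = k ∧
    ∀ y ∈ Y, k ≤ Finset.univ.sup' (Finset.univ_nonempty_iff.mpr (Fin.pos_iff_nonempty.mp hm))
        (fun i => (y i - z i) / lam i) := by
  refine ⟨sup'_div_eq_of_eq_add_mul (fun i => (hlam i).ne') hdef _, fun y hy => ?_⟩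
  by_contra! hlt
  have hbelow : ∀ i, y i < ystar i := fun i => hdef i ▸ lt_add_mul_of_sup'_div_lt hlam hlt i
  exact hpareto ⟨y, hy, fun i => (hbelow i).le, ⟨0, hm⟩, hbelow ⟨0, hm⟩⟩

/-- Under the full-mapping assumption, the point `y* = z + k·λ` (with `k > 0`),
assumed to be Pareto optimal in `Y`, minimizes the modified Tchebycheff aggregation
`g^mtche(·, λ) = max_i (· i − z i)/λ i` over `Y`, and its value is `k`. -/
theorem full_mapping_point_minimizes_mtche {m : ℕ} (hm : 0 < m)
    (Y : Set (Fin m → ℝ)) (z lam : Fin m → ℝ) (hlam : ∀ i, 0 < lam i)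
    (k : ℝ) (hk : 0 < k)
    (ystar : Fin m → ℝ) (hdef : ∀ i, ystar i = z i + k * lam i)
    (hmem : ystar ∈ Y)
    (hpareto : ¬ ∃ y ∈ Y, (∀ i, y i ≤ ystar i) ∧ ∃ j, y j < ystar j) :
    Finset.univ.sup' (Finset.univ_nonempty_iff.mpr (Fin.pos_iff_nonempty.mp hm))
        (fun i => (ystar i - z i) / lam i) = k ∧
    ∀ y ∈ Y, k ≤ Finset.univ.sup' (Finset.univ_nonempty_iff.mpr (Fin.pos_iff_nonempty.mp hm))
        (fun i => (y i - z i) / lam i) :=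
  full_mapping_point_minimizes_mtche_general hm Y z lam hlam k ystar hdef hpareto
end

section
/- Let (T, ρ) be a metric space. For each integer n ≥ 2 define the optimal n-point separation δ*(n) = sup over subsets S ⊆ T of cardinality n of (min over pairs of distinct points s, s' ∈ S of ρ(s, s')). Let N ≥ 2 and suppose S ⊆ T is a subset of cardinality N whose minimal pairwise distance equals δ*(N) (i.e., S attains the optimal configuration), and assume the separation is strictly decreasing at N: δ*(N+1) < δ*(N). Then S is non-asymptotically uniform on T with parameter δ*(N): for every y ∈ T there exists s ∈ S with ρ(y, s) ≤ δ*(N). -/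
/-!
If some `y` were farther than `δ*(N)` from every point of the optimal configuration `S`, then
`S ∪ {y}` would be an `(N+1)`-point configuration whose minimal separation is still `δ*(N)`,
forcing `δ*(N) ≤ δ*(N+1)`. The only subtlety is that `sSup` of an unbounded set of reals is `0`:
since `δ*(N+1) ≥ 0`, strict decrease makes `δ*(N)` positive, hence a genuine supremum, and
restricting `(N+1)`-point configurations to `N` of their points bounds the `(N+1)`-level values.
-/

/-- The minimal pairwise distance of a finite configuration `S` in a metric space. -/
noncomputable def minSep {T : Type*} [MetricSpace T] (S : Finset T) : ℝ :=
  sInf {d : ℝ | ∃ s ∈ S, ∃ s' ∈ S, s ≠ s' ∧ d = dist s s'}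

/-- The optimal `n`-point separation `δ*(n)`: the supremum, over configurations of
cardinality `n`, of the minimal pairwise distance. -/
noncomputable def optSep (T : Type*) [MetricSpace T] (n : ℕ) : ℝ :=
  sSup {d : ℝ | ∃ S : Finset T, S.card = n ∧ d = minSep S}

section MinSep

variable {T : Type*} [MetricSpace T]

theorem minSep_le_dist {S : Finset T} {s s' : T} (hs : s ∈ S) (hs' : s' ∈ S) (hne : s ≠ s') :
    minSep S ≤ dist s s' := by
  refine csInf_le ⟨0, ?_⟩ ⟨s, hs, s', hs', hne, rfl⟩
  rintro d ⟨a, -, b, -, -, rfl⟩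
  exact dist_nonneg

theorem le_minSep {S : Finset T} {δ : ℝ} (hS : 1 < S.card)
    (h : ∀ s ∈ S, ∀ s' ∈ S, s ≠ s' → δ ≤ dist s s') : δ ≤ minSep S := by
  obtain ⟨a, ha, b, hb, hab⟩ := Finset.one_lt_card.mp hS
  refine le_csInf ⟨_, a, ha, b, hb, hab, rfl⟩ ?_
  rintro d ⟨s, hs, s', hs', hne, rfl⟩
  exact h s hs s' hs' hne

theorem minSep_anti {A B : Finset T} (hAB : A ⊆ B) (hA : 1 < A.card) : minSep B ≤ minSep A :=
  le_minSep hA fun _ hs _ hs' hne => minSep_le_dist (hAB hs) (hAB hs') hne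

theorem le_minSep_insert [DecidableEq T] {S : Finset T} {y : T} {δ : ℝ} (hS : 1 < S.card)
    (hδ : δ ≤ minSep S) (hy : ∀ s ∈ S, δ ≤ dist y s) : δ ≤ minSep (insert y S) := by
  refine le_minSep (hS.trans_le (Finset.card_le_card (Finset.subset_insert y S))) ?_
  intro s hs s' hs' hne
  rcases Finset.mem_insert.mp hs with rfl | hsS <;> rcases Finset.mem_insert.mp hs' with rfl | hs'S
  · exact absurd rfl hne
  · exact hy s' hs'S
  · exact dist_comm s s' ▸ hy s hsS
  · exact hδ.trans (minSep_le_dist hsS hs'S hne)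

end MinSep

section OptSep

variable (T : Type*) [MetricSpace T]

theorem optSep_nonneg (n : ℕ) : 0 ≤ optSep T n := by
  refine Real.sSup_nonneg fun d ⟨S, _, hd⟩ => hd ▸ Real.sInf_nonneg ?_
  rintro _ ⟨s, -, s', -, -, rfl⟩
  exact dist_nonneg

theorem bddAbove_minSep_of_optSep_ne_zero {n : ℕ} (h : optSep T n ≠ 0) :
    BddAbove {d : ℝ | ∃ S : Finset T, S.card = n ∧ d = minSep S} := by
  by_contra hbdd
  exact h (Real.sSup_of_not_bddAbove hbdd)

theorem bddAbove_minSep_card_succ {n : ℕ} (hn : 2 ≤ n)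
    (h : BddAbove {d : ℝ | ∃ S : Finset T, S.card = n ∧ d = minSep S}) :
    BddAbove {d : ℝ | ∃ S : Finset T, S.card = n + 1 ∧ d = minSep S} := by
  obtain ⟨M, hM⟩ := h
  refine ⟨M, ?_⟩
  rintro d ⟨B, hB, rfl⟩
  obtain ⟨A, hAB, hA⟩ := Finset.exists_subset_card_eq (show n ≤ B.card by omega)
  exact (minSep_anti hAB (by omega)).trans (hM ⟨A, hA, rfl⟩)

end OptSep

/-- If a configuration `S` of `N ≥ 2` points attains the optimal separation
`δ*(N)` and the optimal separation is strictly decreasing at `N` (`δ*(N+1) < δ*(N)`), then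
`S` is non-asymptotically uniform on `T` with parameter `δ*(N)`: every point of `T` lies
within distance `δ*(N)` of some point of `S`. -/
theorem optimal_configuration_is_nonasymptotically_uniform
    {T : Type*} [MetricSpace T] (N : ℕ) (hN : 2 ≤ N)
    (S : Finset T) (hcard : S.card = N)
    (hopt : minSep S = optSep T N)
    (hdec : optSep T (N + 1) < optSep T N) :
    ∀ y : T, ∃ s ∈ S, dist y s ≤ optSep T N := by
  classical
  intro y
  by_contra! hfar
  have hpos : 0 < optSep T N := (optSep_nonneg T (N + 1)).trans_lt hdec
  have hyS : y ∉ S := fun hy => by linarith [dist_self y ▸ hfar y hy]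
  have hbdd := bddAbove_minSep_card_succ T hN (bddAbove_minSep_of_optSep_ne_zero T hpos.ne')
  have hcard' : (insert y S).card = N + 1 := by rw [Finset.card_insert_of_notMem hyS, hcard]
  have hfar_insert : optSep T N ≤ minSep (insert y S) :=
    le_minSep_insert (by omega) hopt.ge fun s hs => (hfar s hs).le
  have hle_succ : minSep (insert y S) ≤ optSep T (N + 1) := le_csSup hbdd ⟨_, hcard', rfl⟩
  linarith
end
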